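/- arXiv:1607.08014 — 4 statements merged into one kernel-verified Lean document; each statement's English description precedes it below -/
import Mathlib

section
/- Let c⁰, c¹, c² : ℝ → ℝ be continuous functions and let A, B, W : ℝ → ℝ be differentiable functions satisfying A'(t) = -4 c⁰(t) A(t) B(t) - c¹(t), B'(t) = -4 c⁰(t) B(t)² - c²(t), and W'(t) = c⁰(t) (A(t)² - 2 B(t)) W(t). Then the function u(x,t) = W(t) · exp(-A(t) x - B(t) x²) satisfies the modified heat equation ∂ₜ u = c⁰(t) ∂ₓₓ u + c¹(t) x u + c²(t) x² u for all (x,t). -/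
/-! Both sides of the equation are `exp (-A x - B x²)` times a quadratic polynomial in `x`:
`∂ₜ u` contributes `W' - W (A' x + B' x²)` and `∂ₓₓ u` contributes `W ((A + 2 B x)² - 2 B)`.
The ODEs for `W`, `A`, `B` say exactly that the coefficients of `1`, `x`, `x²` agree. -/

open Real

theorem hasDerivAt_gaussian (w a b x : ℝ) :
    HasDerivAt (fun y => w * exp (-a * y - b * y ^ 2))
      (w * exp (-a * x - b * x ^ 2) * (-a - 2 * b * x)) x := by
  have hexponent : HasDerivAt (fun y => -a * y - b * y ^ 2) (-a - 2 * b * x) x := by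
    refine (((hasDerivAt_id' x).const_mul (-a)).sub
      ((hasDerivAt_pow 2 x).const_mul b)).congr_deriv ?_
    simp only [mul_one, Nat.cast_ofNat, Nat.add_one_sub_one, pow_one]
    ring
  simpa [mul_assoc] using hexponent.exp.const_mul w

theorem deriv_gaussian (w a b : ℝ) :
    deriv (fun y => w * exp (-a * y - b * y ^ 2)) =
      fun x => w * exp (-a * x - b * x ^ 2) * (-a - 2 * b * x) :=
  funext fun x => (hasDerivAt_gaussian w a b x).deriv

theorem deriv_deriv_gaussian (w a b x : ℝ) :
    deriv (deriv fun y => w * exp (-a * y - b * y ^ 2)) x =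
      w * exp (-a * x - b * x ^ 2) * ((a + 2 * b * x) ^ 2 - 2 * b) := by
  have hlinear : HasDerivAt (fun y => -a - 2 * b * y) (-(2 * b)) x := by
    simpa using ((hasDerivAt_id x).const_mul (2 * b)).const_sub (-a)
  rw [deriv_gaussian]
  refine ((hasDerivAt_gaussian w a b x).mul hlinear).deriv.trans ?_
  ring

theorem hasDerivAt_gaussian_of_params {W A B : ℝ → ℝ} {w' a' b' t : ℝ}
    (hW : HasDerivAt W w' t) (hA : HasDerivAt A a' t) (hB : HasDerivAt B b' t) (x : ℝ) :
    HasDerivAt (fun τ => W τ * exp (-A τ * x - B τ * x ^ 2))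
      ((w' - W t * (a' * x + b' * x ^ 2)) * exp (-A t * x - B t * x ^ 2)) t := by
  refine (hW.mul ((hA.neg.mul_const x).sub (hB.mul_const (x ^ 2))).exp).congr_deriv ?_
  simp only [Pi.neg_apply, Pi.sub_apply]
  ring

theorem stmt_0_general (c0 c1 c2 A B W : ℝ → ℝ)
    (hA : Differentiable ℝ A) (hB : Differentiable ℝ B) (hW : Differentiable ℝ W)
    (hA' : ∀ t, deriv A t = -4 * c0 t * A t * B t - c1 t)
    (hB' : ∀ t, deriv B t = -4 * c0 t * (B t) ^ 2 - c2 t)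
    (hW' : ∀ t, deriv W t = c0 t * ((A t) ^ 2 - 2 * B t) * W t)
    (u : ℝ → ℝ → ℝ)
    (hu : ∀ x t, u x t = W t * Real.exp (-(A t) * x - B t * x ^ 2)) :
    ∀ x t, deriv (fun τ => u x τ) t =
      c0 t * deriv (deriv (fun y => u y t)) x + c1 t * x * u x t + c2 t * x ^ 2 * u x t := by
  intro x t
  have hu_space : (fun y => u y t) = fun y => W t * exp (-A t * y - B t * y ^ 2) :=
    funext fun y => hu y t
  have hu_time : (fun τ => u x τ) = fun τ => W τ * exp (-A τ * x - B τ * x ^ 2) :=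
    funext fun τ => hu x τ
  have hu_dt :=
    hasDerivAt_gaussian_of_params (hW t).hasDerivAt (hA t).hasDerivAt (hB t).hasDerivAt x
  rw [hu_space, deriv_deriv_gaussian, hu_time, hu_dt.deriv, hu, hW', hA', hB']
  ring

/-- Gaussian reduction for the modified heat equation. -/
theorem stmt_0 (c0 c1 c2 A B W : ℝ → ℝ)
    (hc0 : Continuous c0) (hc1 : Continuous c1) (hc2 : Continuous c2)
    (hA : Differentiable ℝ A) (hB : Differentiable ℝ B) (hW : Differentiable ℝ W)
    (hA' : ∀ t, deriv A t = -4 * c0 t * A t * B t - c1 t)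
    (hB' : ∀ t, deriv B t = -4 * c0 t * (B t) ^ 2 - c2 t)
    (hW' : ∀ t, deriv W t = c0 t * ((A t) ^ 2 - 2 * B t) * W t)
    (u : ℝ → ℝ → ℝ)
    (hu : ∀ x t, u x t = W t * Real.exp (-(A t) * x - B t * x ^ 2)) :
    ∀ x t, deriv (fun τ => u x τ) t =
      c0 t * deriv (deriv (fun y => u y t)) x + c1 t * x * u x t + c2 t * x ^ 2 * u x t :=
  stmt_0_general c0 c1 c2 A B W hA hB hW hA' hB' hW' u hu
end

section
/- Let H : ℝ → ℝ be continuously differentiable, c¹, c² : ℝ → ℝ continuous, and A, B : ℝ → ℝ differentiable with A'(t) = -c¹(t) e^{-B(t)} and B'(t) = -c²(t). Suppose U : ℝ × ℝ → ℝ is differentiable and satisfies the implicit relation U(x,t) = e^{-B(t)} H(x - A(t) e^{B(t)} U(x,t)) for all (x,t), and suppose 1 + A(t) H'(x - A(t) e^{B(t)} U(x,t)) ≠ 0 at a point (x₀,t₀). Then at (x₀,t₀), ∂ₜ U = c¹(t₀) U ∂ₓ U + c²(t₀) U. -/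
/-!
Differentiating the implicit relation `U = e^{-B} H(x - A e^B U)` once in `x` and once in `t`
gives two linear equations for `∂ₓU` and `∂ₜU`, both with the coefficient `1 + A H'`. Using
`A' = -c¹ e^{-B}` and `B' = -c²`, the `t`-equation is `c²U` times that coefficient plus `c¹U`
times the right-hand side of the `x`-equation, so cancelling the nonzero coefficient gives the PDE.
-/

open Real

theorem HasDerivAt.mul_one_add_eq_of_implicit {𝕜 : Type*} [NontriviallyNormedField 𝕜]
    {u E X P H : 𝕜 → 𝕜} {u' E' X' P' D s : 𝕜}
    (hu : HasDerivAt u u' s) (hE : HasDerivAt E E' s) (hX : HasDerivAt X X' s)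
    (hP : HasDerivAt P P' s) (hH : HasDerivAt H D (X s - P s * u s))
    (himp : ∀ r, u r = E r * H (X r - P r * u r)) :
    u' * (1 + E s * P s * D) = E' * H (X s - P s * u s) + E s * D * (X' - P' * u s) := by
  have hu' := hE.fun_mul (hH.comp s (hX.fun_sub (hP.fun_mul hu)))
  rw [show (fun r => E r * (H ∘ fun r => X r - P r * u r) r) = u from
    funext fun r => (himp r).symm] at hu'
  have hu'' := hu.unique hu'
  rw [Function.comp_apply] at hu''
  linear_combination hu''

theorem stmt_3_general (H c1 c2 A B : ℝ → ℝ)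
    (hH : ContDiff ℝ 1 H)
    (hA : Differentiable ℝ A) (hB : Differentiable ℝ B)
    (hA' : ∀ t, deriv A t = -c1 t * Real.exp (-B t))
    (hB' : ∀ t, deriv B t = -c2 t)
    (U : ℝ → ℝ → ℝ)
    (hU : Differentiable ℝ (fun p : ℝ × ℝ => U p.1 p.2))
    (himp : ∀ x t, U x t = Real.exp (-B t) * H (x - A t * Real.exp (B t) * U x t))
    (x₀ t₀ : ℝ)
    (hnd : 1 + A t₀ * deriv H (x₀ - A t₀ * Real.exp (B t₀) * U x₀ t₀) ≠ 0) :
    deriv (fun τ => U x₀ τ) t₀ =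
      c1 t₀ * U x₀ t₀ * deriv (fun y => U y t₀) x₀ + c2 t₀ * U x₀ t₀ := by
  have hHφ := ((hH.differentiable one_ne_zero) (x₀ - A t₀ * exp (B t₀) * U x₀ t₀)).hasDerivAt
  have hUx : HasDerivAt (fun y => U y t₀) (deriv (fun y => U y t₀) x₀) x₀ :=
    ((hU.comp (by fun_prop : Differentiable ℝ fun y : ℝ => (y, t₀))) x₀).hasDerivAt
  have hUt : HasDerivAt (fun τ => U x₀ τ) (deriv (fun τ => U x₀ τ) t₀) t₀ :=
    ((hU.comp (by fun_prop : Differentiable ℝ fun τ : ℝ => (x₀, τ))) t₀).hasDerivAt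
  have hBt : HasDerivAt B (-c2 t₀) t₀ := hB' t₀ ▸ (hB t₀).hasDerivAt
  have hAt : HasDerivAt A (-c1 t₀ * exp (-B t₀)) t₀ := hA' t₀ ▸ (hA t₀).hasDerivAt
  have space := hUx.mul_one_add_eq_of_implicit (hasDerivAt_const x₀ (exp (-B t₀)))
    (hasDerivAt_id x₀) (hasDerivAt_const x₀ (A t₀ * exp (B t₀))) hHφ fun y => himp y t₀
  have hE : HasDerivAt (fun t => exp (-B t)) (exp (-B t₀) * c2 t₀) t₀ := by
    simpa using hBt.fun_neg.exp
  have hexp : exp (-B t₀) * exp (B t₀) = 1 := by rw [← exp_add, neg_add_cancel, exp_zero]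
  have hP : HasDerivAt (fun t => A t * exp (B t)) (-(c1 t₀ + c2 t₀ * A t₀ * exp (B t₀))) t₀ :=
    (hAt.fun_mul hBt.exp).congr_deriv (by linear_combination -c1 t₀ * hexp)
  have time := hUt.mul_one_add_eq_of_implicit hE (hasDerivAt_const t₀ x₀) hP hHφ (himp x₀)
  set D := deriv H (x₀ - A t₀ * exp (B t₀) * U x₀ t₀)
  set u := U x₀ t₀
  refine mul_left_cancel₀ hnd ?_
  linear_combination time - c1 t₀ * u * space - c2 t₀ * himp x₀ t₀ + A t₀ * D *
    (c1 t₀ * u * deriv (fun y => U y t₀) x₀ + c2 t₀ * u - deriv (fun τ => U x₀ τ) t₀) * hexp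

/-- Implicit-form solution of the non-linear transport equation with dissipation. -/
theorem stmt_3 (H c1 c2 A B : ℝ → ℝ)
    (hH : ContDiff ℝ 1 H) (hc1 : Continuous c1) (hc2 : Continuous c2)
    (hA : Differentiable ℝ A) (hB : Differentiable ℝ B)
    (hA' : ∀ t, deriv A t = -c1 t * Real.exp (-B t))
    (hB' : ∀ t, deriv B t = -c2 t)
    (U : ℝ → ℝ → ℝ)
    (hU : Differentiable ℝ (fun p : ℝ × ℝ => U p.1 p.2))
    (himp : ∀ x t, U x t = Real.exp (-B t) * H (x - A t * Real.exp (B t) * U x t))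
    (x₀ t₀ : ℝ)
    (hnd : 1 + A t₀ * deriv H (x₀ - A t₀ * Real.exp (B t₀) * U x₀ t₀) ≠ 0) :
    deriv (fun τ => U x₀ τ) t₀ =
      c1 t₀ * U x₀ t₀ * deriv (fun y => U y t₀) x₀ + c2 t₀ * U x₀ t₀ :=
  stmt_3_general H c1 c2 A B hH hA hB hA' hB' U hU himp x₀ t₀ hnd
end

section
/- Let c¹ : ℝ → ℝ be continuous and let u : ℝ × ℝ → ℝ be smooth and satisfy the forced KdV equation ∂ₜ u = ∂ₓₓₓ u + u ∂ₓ u + c¹(t). Define C¹(t) = ∫₀ᵗ c¹(s) ds and a(t) = -∫₀ᵗ C¹(s) ds, and set v(x,t) = u(x + a(t), t) - C¹(t). Then v satisfies the KdV equation ∂ₜ v = ∂ₓₓₓ v + v ∂ₓ v. -/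
/-- Galilean-type transformation removing the forcing term from the perturbed KdV equation. -/
theorem stmt_14 (c1 : ℝ → ℝ) (hc1 : Continuous c1)
    (u : ℝ → ℝ → ℝ) (hu : ContDiff ℝ (⊤ : ℕ∞) (fun p : ℝ × ℝ => u p.1 p.2))
    (heq : ∀ x t, deriv (fun τ => u x τ) t =
      deriv (deriv (deriv (fun y => u y t))) x + u x t * deriv (fun y => u y t) x + c1 t)
    (C1 a : ℝ → ℝ) (hC1 : ∀ t, C1 t = ∫ s in (0:ℝ)..t, c1 s)
    (ha : ∀ t, a t = -∫ s in (0:ℝ)..t, C1 s)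
    (v : ℝ → ℝ → ℝ) (hv : ∀ x t, v x t = u (x + a t) t - C1 t) :
    ∀ x t, deriv (fun τ => v x τ) t =
      deriv (deriv (deriv (fun y => v y t))) x + v x t * deriv (fun y => v y t) x := by
  intro x t
  set U : ℝ × ℝ → ℝ := fun p => u p.1 p.2 with hU
  -- derivatives of C1 and a
  have hC1' : ∀ s, HasDerivAt C1 (c1 s) s := by
    intro s
    have : C1 = fun t => ∫ σ in (0:ℝ)..t, c1 σ := funext hC1
    rw [this]
    exact ((hc1.integral_hasStrictDerivAt 0 s).hasDerivAt)
  have hC1cont : Continuous C1 :=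
    continuous_iff_continuousAt.2 fun s => (hC1' s).continuousAt
  have ha' : HasDerivAt a (-C1 t) t := by
    have : a = fun t => -∫ σ in (0:ℝ)..t, C1 σ := funext ha
    rw [this]
    exact ((hC1cont.integral_hasStrictDerivAt 0 t).hasDerivAt).neg
  set p : ℝ × ℝ := (x + a t, t) with hp
  have hUd : HasFDerivAt U (fderiv ℝ U p) p :=
    ((hu.differentiable (by simp)) p).hasFDerivAt
  set Dx : ℝ := fderiv ℝ U p (1, 0) with hDx
  set Dt : ℝ := fderiv ℝ U p (0, 1) with hDt
  -- partial derivatives identified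
  have hx : HasDerivAt (fun y => u y t) Dx (x + a t) := by
    have hcurve : HasDerivAt (fun y : ℝ => (y, t)) ((1:ℝ), (0:ℝ)) (x + a t) :=
      HasDerivAt.prodMk (hasDerivAt_id _) (hasDerivAt_const _ _)
    exact hUd.comp_hasDerivAt (x + a t) hcurve
  have ht : HasDerivAt (fun τ => u (x + a t) τ) Dt t := by
    have hcurve : HasDerivAt (fun τ : ℝ => ((x + a t : ℝ), τ)) ((0:ℝ), (1:ℝ)) t :=
      HasDerivAt.prodMk (hasDerivAt_const _ _) (hasDerivAt_id _)
    exact hUd.comp_hasDerivAt t hcurve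
  -- time derivative of v
  have hτ : HasDerivAt (fun τ => u (x + a τ) τ) (-C1 t * Dx + Dt) t := by
    have hcurve : HasDerivAt (fun τ : ℝ => ((x + a τ : ℝ), τ)) ((-C1 t : ℝ), (1:ℝ)) t :=
      HasDerivAt.prodMk (ha'.const_add x) (hasDerivAt_id _)
    have h := hUd.comp_hasDerivAt_of_eq t hcurve rfl
    have hval : fderiv ℝ U p (-C1 t, 1) = -C1 t * Dx + Dt := by
      have : ((-C1 t : ℝ), (1:ℝ)) = (-C1 t) • ((1:ℝ), (0:ℝ)) + ((0:ℝ), (1:ℝ)) := by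
        simp [Prod.ext_iff]
      rw [this, map_add, map_smul, hDx, hDt]
      simp [smul_eq_mul]
    rw [hval] at h
    exact h
  have hvt : deriv (fun τ => v x τ) t = -C1 t * Dx + Dt - c1 t := by
    have : (fun τ => v x τ) = fun τ => u (x + a τ) τ - C1 τ := funext fun τ => hv x τ
    rw [this]
    exact (hτ.sub (hC1' t)).deriv
  -- spatial derivatives of v
  have hv1 : deriv (fun y => v y t) = fun y => deriv (fun z => u z t) (y + a t) := by
    funext y
    have : (fun y => v y t) = fun y => u (y + a t) t - C1 t :=
      funext fun y => hv y t
    rw [this]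
    simp only [deriv_sub_const]
    exact deriv_comp_add_const (fun z => u z t) (a t) y
  have hv2 : deriv (deriv (fun y => v y t)) =
      fun y => deriv (deriv (fun z => u z t)) (y + a t) := by
    funext y
    rw [hv1]
    exact deriv_comp_add_const (deriv fun z => u z t) (a t) y
  have hv3 : deriv (deriv (deriv (fun y => v y t))) x =
      deriv (deriv (deriv (fun z => u z t))) (x + a t) := by
    rw [hv2]
    exact deriv_comp_add_const (deriv (deriv fun z => u z t)) (a t) x
  -- put it together
  have hDxval : Dx = deriv (fun z => u z t) (x + a t) := hx.deriv.symm
  have hDtval : Dt = deriv (fun τ => u (x + a t) τ) t := ht.deriv.symm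
  rw [hvt, hv3, hv1, hv x t, hDxval, hDtval, heq (x + a t) t]
  ring
end

section
/- Let β ∈ ℝ and let u, v : ℝ × ℝ → ℝ be smooth with v(x,t) satisfying ∂ₓₓ v = β v and ∂ₜ v = ∂ₓₓ v, and let a, b, c, c⁰⁰, c¹¹, c⁰¹ : ℝ → ℝ be differentiable with a' = 2β² b - c⁰⁰, b' = 2a - c¹¹, c' = 2β c - c⁰¹. Suppose u satisfies ∂ₓ u = γ u + (b (∂ₓ v)² + c v ∂ₓ v + a v²) γ - c (∂ₓ v)² - (2 b β + 2 a) v ∂ₓ v - β c v² and ∂ₜ u = γ² u + (b (∂ₓ v)² + c v ∂ₓ v + a v²) γ² - (2bβ + 2a)(∂ₓ v)² - 4β c v ∂ₓ v - (2bβ² + 2aβ) v² + c⁰⁰ v² + c¹¹ (∂ₓ v)² + c⁰¹ v ∂ₓ v, for a fixed constant γ ∈ ℝ. Then u satisfies ∂ₜ u = ∂ₓₓ u + c⁰⁰(t) v² + c¹¹(t) (∂ₓ v)² + c⁰¹(t) v ∂ₓ v. -/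
/-- Compatibility of the reduced overdetermined system for the integrable 2D system. -/
theorem stmt_19 (β γ : ℝ) (u v : ℝ → ℝ → ℝ)
    (hu : ContDiff ℝ (⊤ : ℕ∞) (fun p : ℝ × ℝ => u p.1 p.2))
    (hv : ContDiff ℝ (⊤ : ℕ∞) (fun p : ℝ × ℝ => v p.1 p.2))
    (hvxx : ∀ x t, deriv (deriv (fun y => v y t)) x = β * v x t)
    (hvt : ∀ x t, deriv (fun τ => v x τ) t = deriv (deriv (fun y => v y t)) x)
    (a b c c00 c11 c01 : ℝ → ℝ)
    (ha : Differentiable ℝ a) (hb : Differentiable ℝ b) (hc : Differentiable ℝ c)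
    (ha' : ∀ t, deriv a t = 2 * β ^ 2 * b t - c00 t)
    (hb' : ∀ t, deriv b t = 2 * a t - c11 t)
    (hc' : ∀ t, deriv c t = 2 * β * c t - c01 t)
    (hux : ∀ x t, deriv (fun y => u y t) x =
      γ * u x t + (b t * (deriv (fun y => v y t) x) ^ 2
        + c t * v x t * deriv (fun y => v y t) x + a t * (v x t) ^ 2) * γ
      - c t * (deriv (fun y => v y t) x) ^ 2
      - (2 * b t * β + 2 * a t) * v x t * deriv (fun y => v y t) x
      - β * c t * (v x t) ^ 2)
    (hut : ∀ x t, deriv (fun τ => u x τ) t =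
      γ ^ 2 * u x t + (b t * (deriv (fun y => v y t) x) ^ 2
        + c t * v x t * deriv (fun y => v y t) x + a t * (v x t) ^ 2) * γ ^ 2
      - (2 * b t * β + 2 * a t) * (deriv (fun y => v y t) x) ^ 2
      - 4 * β * c t * v x t * deriv (fun y => v y t) x
      - (2 * b t * β ^ 2 + 2 * a t * β) * (v x t) ^ 2
      + c00 t * (v x t) ^ 2 + c11 t * (deriv (fun y => v y t) x) ^ 2
      + c01 t * v x t * deriv (fun y => v y t) x) :
    ∀ x t, deriv (fun τ => u x τ) t =
      deriv (deriv (fun y => u y t)) x + c00 t * (v x t) ^ 2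
      + c11 t * (deriv (fun y => v y t) x) ^ 2
      + c01 t * v x t * deriv (fun y => v y t) x := by
  intro x t
  have huC : ContDiff ℝ (⊤ : ℕ∞) (fun y => u y t) := hu.comp (contDiff_id.prodMk contDiff_const)
  have hvC : ContDiff ℝ (⊤ : ℕ∞) (fun y => v y t) := hv.comp (contDiff_id.prodMk contDiff_const)
  have hu'C : ContDiff ℝ ((⊤ : ℕ∞) : WithTop ℕ∞) (deriv (fun y => u y t)) :=
    (contDiff_infty_iff_deriv.mp (huC.of_le (by simp))).2
  have hv'C : ContDiff ℝ ((⊤ : ℕ∞) : WithTop ℕ∞) (deriv (fun y => v y t)) :=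
    (contDiff_infty_iff_deriv.mp (hvC.of_le (by simp))).2
  have hU : HasDerivAt (fun y => u y t) (deriv (fun y => u y t) x) x :=
    ((huC.differentiable (by simp)) x).hasDerivAt
  have hV : HasDerivAt (fun y => v y t) (deriv (fun y => v y t) x) x :=
    ((hvC.differentiable (by simp)) x).hasDerivAt
  have hVx : HasDerivAt (deriv (fun y => v y t)) (β * v x t) x := by
    have h := ((hv'C.differentiable (by simp)) x).hasDerivAt
    rwa [hvxx x t] at h
  have hE : deriv (fun y => u y t) = fun y =>
      γ * u y t + (b t * (deriv (fun z => v z t) y) ^ 2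
        + c t * v y t * deriv (fun z => v z t) y + a t * (v y t) ^ 2) * γ
      - c t * (deriv (fun z => v z t) y) ^ 2
      - (2 * b t * β + 2 * a t) * v y t * deriv (fun z => v z t) y
      - β * c t * (v y t) ^ 2 := funext fun y => hux y t
  have hD := ((((hU.const_mul γ).add
      (((((hVx.pow 2).const_mul (b t)).add
        ((hV.const_mul (c t)).mul hVx)).add
        ((hV.pow 2).const_mul (a t))).mul_const γ)).sub
      ((hVx.pow 2).const_mul (c t))).sub
      ((hV.const_mul (2 * b t * β + 2 * a t)).mul hVx)).sub
      ((hV.pow 2).const_mul (β * c t))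
  have h2 := hD.deriv
  simp only [Pi.add_def, Pi.sub_def, Pi.mul_def, Pi.pow_def] at h2
  rw [← hE] at h2
  rw [hut x t, h2, hux x t]
  ring
end
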